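/- Let n ≥ 1. Then 4/(X_{n-1} − 2) ∈ ℤ[X_{n-1}], and the periodic continued fraction [2, 4/(X_{n-1}−2), 4, 4/(X_{n-1}−2), 4, …] (i.e. the sequence c with c₀ = 2, c_{2k+1} = 4/(X_{n-1} − 2), and c_{2k+2} = 4 for all k ≥ 0) converges to X_n. -/

import Mathlib

/-- `X n = 2 cos(2π/2^(n+2))`. -/
noncomputable def X (n : ℕ) : ℝ := 2 * Real.cos (2 * Real.pi / 2 ^ (n + 2))

/-- Convergent numerators: `cfNum c (k+1) = p_k`, with `cfNum c 0 = p_{-1} = 1`. -/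
noncomputable def cfNum (c : ℕ → ℝ) : ℕ → ℝ
  | 0 => 1
  | 1 => c 0
  | (k + 2) => c (k + 1) * cfNum c (k + 1) + cfNum c k

/-- Convergent denominators: `cfDen c (k+1) = q_k`, with `cfDen c 0 = q_{-1} = 0`. -/
noncomputable def cfDen (c : ℕ → ℝ) : ℕ → ℝ
  | 0 => 0
  | 1 => 1
  | (k + 2) => c (k + 1) * cfDen c (k + 1) + cfDen c k

/-- The continued fraction `[c₀, c₁, c₂, …]` converges to `x`. -/
def CFConv (c : ℕ → ℝ) (x : ℝ) : Prop :=
  Filter.Tendsto (fun k => cfNum c (k + 1) / cfDen c (k + 1)) Filter.atTop (nhds x)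

/-!
For `x > 0`, `x ≠ 2` and `u = 4 / (x² - 4)`, both
`A k = (x + 2) ^ (k % 2) * ((x + 2) / (x - 2)) ^ (k / 2)` and its image `B` under `x ↦ -x`
satisfy the recurrence of the convergents of `[2, u, 4, u, 4, …]`. Comparing initial values gives
`p = (A + B) / 2` and `q = (A - B) / (2 x)`, and since `B k = t ^ k * A k` with
`t = (2 - x) / (2 + x)`, `|t| < 1`, the convergents `x (1 + t ^ k) / (1 - t ^ k)` tend to `x`.
Applied to `x = X n` this gives the limit, because `X (n - 1) - 2 = X n ^ 2 - 4`. For integrality,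
`2 - X m = (2 - X (m + 1)) (2 + X (m + 1))` and `2 - X 0 = 2` show that
`2 / (2 - X m) = ∏_{1 ≤ j ≤ m} (2 + X j)` lies in `ℤ[X m]`.
-/

open Filter Topology

def CFRecurrence {R : Type*} [Semiring R] (c w : ℕ → R) : Prop :=
  ∀ k, w (k + 2) = c (k + 1) * w (k + 1) + w k

theorem cfRecurrence_cfNum (c : ℕ → ℝ) : CFRecurrence c (cfNum c) := fun _ => rfl

theorem cfRecurrence_cfDen (c : ℕ → ℝ) : CFRecurrence c (cfDen c) := fun _ => rfl

theorem CFRecurrence.eq_of_eq_init {R : Type*} [Semiring R] {c w w' : ℕ → R}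
    (hw : CFRecurrence c w) (hw' : CFRecurrence c w') (h0 : w 0 = w' 0) (h1 : w 1 = w' 1) :
    w = w' := by
  have h : ∀ k, w k = w' k ∧ w (k + 1) = w' (k + 1) := by
    intro k
    induction k with
    | zero => exact ⟨h0, h1⟩
    | succ k ih => exact ⟨ih.2, by rw [hw, hw', ih.1, ih.2]⟩
  exact funext fun k => (h k).1

theorem cfRecurrence_pow_mod_two_mul_pow_div_two {R : Type*} [CommRing R] {c : ℕ → R}
    {u v a b : R} (hcodd : ∀ k, c (2 * k + 1) = u) (hceven : ∀ k, c (2 * k + 2) = v)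
    (hb : b = u * a + 1) (hab : a * b = v * b + a) :
    CFRecurrence c (fun k => a ^ (k % 2) * b ^ (k / 2)) := by
  intro k
  obtain ⟨m, rfl | rfl⟩ := Nat.even_or_odd' k
  · have e0 : (2 * m + 2) % 2 = 0 ∧ (2 * m + 2) / 2 = m + 1 := by omega
    have e1 : (2 * m + 1) % 2 = 1 ∧ (2 * m + 1) / 2 = m := by omega
    have e2 : (2 * m) % 2 = 0 ∧ (2 * m) / 2 = m := by omega
    simp only [e0, e1, e2, hcodd, pow_zero, one_mul, pow_succ]
    linear_combination b ^ m * hb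
  · have e0 : (2 * m + 1 + 2) % 2 = 1 ∧ (2 * m + 1 + 2) / 2 = m + 1 := by omega
    have e1 : (2 * m + 1 + 1) % 2 = 0 ∧ (2 * m + 1 + 1) / 2 = m + 1 := by omega
    have e2 : (2 * m + 1) % 2 = 1 ∧ (2 * m + 1) / 2 = m := by omega
    simp only [e0, e1, e2, hceven, pow_zero, one_mul, pow_succ]
    linear_combination b ^ m * hab

theorem mul_pow_mod_two_mul_mul_pow_div_two {M : Type*} [CommMonoid M] (t a b : M) (k : ℕ) :
    (t * a) ^ (k % 2) * (t ^ 2 * b) ^ (k / 2) = t ^ k * (a ^ (k % 2) * b ^ (k / 2)) := by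
  rw [mul_pow, mul_pow, ← pow_mul, show t ^ k = t ^ (k % 2) * t ^ (2 * (k / 2)) by
    rw [← pow_add, Nat.mod_add_div]]
  exact mul_mul_mul_comm ..

theorem cfNum_div_cfDen_of_periodic {x : ℝ} (hx0 : x ≠ 0) (hx4 : x ^ 2 ≠ 4) {c : ℕ → ℝ}
    (hc0 : c 0 = 2) (hcodd : ∀ k, c (2 * k + 1) = 4 / (x ^ 2 - 4))
    (hceven : ∀ k, c (2 * k + 2) = 4) (k : ℕ) :
    cfNum c k / cfDen c k = x * (1 + ((2 - x) / (x + 2)) ^ k) / (1 - ((2 - x) / (x + 2)) ^ k) := by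
  have hxp : x + 2 ≠ 0 := fun h => hx4 (by rw [eq_neg_of_add_eq_zero_left h]; norm_num)
  have hxm : x - 2 ≠ 0 := fun h => hx4 (by rw [sub_eq_zero.mp h]; norm_num)
  have hx4' : x ^ 2 - 4 ≠ 0 := sub_ne_zero.mpr hx4
  set A : ℕ → ℝ := fun j => (x + 2) ^ (j % 2) * ((x + 2) / (x - 2)) ^ (j / 2)
  set B : ℕ → ℝ := fun j => (2 - x) ^ (j % 2) * ((x - 2) / (x + 2)) ^ (j / 2)
  set t := (2 - x) / (x + 2) with ht_def
  have hA : CFRecurrence c A := cfRecurrence_pow_mod_two_mul_pow_div_two hcodd hceven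
    (by field_simp; ring) (by field_simp; ring)
  have hB : CFRecurrence c B := cfRecurrence_pow_mod_two_mul_pow_div_two hcodd hceven
    (by field_simp; ring) (by field_simp; ring)
  have hNum : cfNum c = fun j => (A j + B j) / 2 :=
    (cfRecurrence_cfNum c).eq_of_eq_init (fun j => by linear_combination (hA j + hB j) / 2)
      (by norm_num [A, B, cfNum])
      (by
        simp only [A, B, cfNum, hc0, Nat.mod_succ, Nat.reduceDiv, pow_one, pow_zero, mul_one]
        ring)
  have hDen : cfDen c = fun j => (A j - B j) / (2 * x) :=
    (cfRecurrence_cfDen c).eq_of_eq_init (fun j => by linear_combination (hA j - hB j) / (2 * x))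
      (by norm_num [A, B, cfDen])
      (by
        simp only [A, B, cfDen, Nat.mod_succ, Nat.reduceDiv, pow_one, pow_zero, mul_one]
        field_simp
        ring)
  have hBA : B k = t ^ k * A k := by
    have h1 : t * (x + 2) = 2 - x := by rw [ht_def]; field_simp
    have h2 : t ^ 2 * ((x + 2) / (x - 2)) = (x - 2) / (x + 2) := by rw [ht_def]; field_simp; ring
    simp only [A, B, ← h1, ← h2, mul_pow_mod_two_mul_mul_pow_div_two]
  have hA0 : A k ≠ 0 := mul_ne_zero (pow_ne_zero _ hxp) (pow_ne_zero _ (div_ne_zero hxp hxm))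
  simp only [hNum, hDen, hBA]
  rw [← one_add_mul, ← one_sub_mul, div_div_eq_mul_div,
    ← mul_div_mul_right (x * (1 + t ^ k)) _ hA0]
  ring

theorem cfConv_of_periodic {x : ℝ} (hx : 0 < x) (hx2 : x ≠ 2) {c : ℕ → ℝ} (hc0 : c 0 = 2)
    (hcodd : ∀ k, c (2 * k + 1) = 4 / (x ^ 2 - 4)) (hceven : ∀ k, c (2 * k + 2) = 4) :
    CFConv c x := by
  have hx4 : x ^ 2 ≠ 4 := fun h => hx2 (by nlinarith)
  set t := (2 - x) / (x + 2)
  have ht : |t| < 1 := by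
    rw [abs_div, abs_of_pos (by positivity : 0 < x + 2), div_lt_one (by positivity), abs_lt]
    constructor <;> linarith
  have ht0 : Tendsto (fun k => t ^ (k + 1)) atTop (𝓝 0) :=
    (tendsto_pow_atTop_nhds_zero_of_abs_lt_one ht).comp (tendsto_add_atTop_nat 1)
  have hlim := ((ht0.const_add 1).const_mul x).div (ht0.const_sub 1) (by norm_num)
  simp only [add_zero, sub_zero, mul_one, div_one] at hlim
  exact hlim.congr fun k =>
    (cfNum_div_cfDen_of_periodic hx.ne' hx4 hc0 hcodd hceven (k + 1)).symm

theorem X_zero : X 0 = 0 := by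
  rw [X, show 2 * Real.pi / 2 ^ (0 + 2) = Real.pi / 2 by ring, Real.cos_pi_div_two, mul_zero]

theorem X_succ_sq (m : ℕ) : X (m + 1) ^ 2 = 2 + X m := by
  have h := Real.cos_sq (2 * Real.pi / 2 ^ (m + 1 + 2))
  rw [show 2 * (2 * Real.pi / 2 ^ (m + 1 + 2)) = 2 * Real.pi / 2 ^ (m + 2) by ring] at h
  rw [X, X, mul_pow, h]
  ring

theorem X_nonneg (n : ℕ) : 0 ≤ X n := by
  have hθ : 2 * Real.pi / 2 ^ (n + 2) = Real.pi / 2 ^ (n + 1) := by rw [pow_succ _ (n + 1)]; ring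
  have hle : Real.pi / 2 ^ (n + 1) ≤ Real.pi / 2 :=
    div_le_div_of_nonneg_left Real.pi_pos.le two_pos (le_self_pow₀ one_le_two n.succ_ne_zero)
  have hpos : 0 ≤ Real.pi / 2 ^ (n + 1) := by positivity
  rw [X, hθ]
  exact mul_nonneg two_pos.le (Real.cos_nonneg_of_mem_Icc ⟨by linarith [Real.pi_pos], hle⟩)

theorem X_lt_two (n : ℕ) : X n < 2 := by
  induction n with
  | zero => rw [X_zero]; exact two_pos
  | succ m ih => nlinarith [X_succ_sq m, X_nonneg (m + 1)]

theorem X_succ_pos (m : ℕ) : 0 < X (m + 1) := by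
  nlinarith [X_succ_sq m, X_nonneg m, X_nonneg (m + 1)]

theorem X_mem_adjoin_X_succ (m : ℕ) : X m ∈ Algebra.adjoin ℤ ({X (m + 1)} : Set ℝ) := by
  rw [show X m = X (m + 1) ^ 2 - 2 by rw [X_succ_sq]; ring]
  exact sub_mem (pow_mem (Algebra.self_mem_adjoin_singleton ℤ _) 2) (natCast_mem _ 2)

theorem exists_mem_adjoin_X_mul_two_sub_X_eq_two (m : ℕ) :
    ∃ r ∈ Algebra.adjoin ℤ ({X m} : Set ℝ), r * (2 - X m) = 2 := by
  induction m with
  | zero => exact ⟨1, one_mem _, by rw [X_zero]; ring⟩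
  | succ m ih =>
    obtain ⟨r, hr, hr2⟩ := ih
    refine ⟨r * (2 + X (m + 1)), mul_mem (Algebra.adjoin_singleton_le (X_mem_adjoin_X_succ m) hr)
      (add_mem (natCast_mem _ 2) (Algebra.self_mem_adjoin_singleton ℤ _)), ?_⟩
    linear_combination hr2 - r * X_succ_sq m

theorem four_div_X_sub_two_mem_adjoin (m : ℕ) :
    4 / (X m - 2) ∈ Algebra.adjoin ℤ ({X m} : Set ℝ) := by
  obtain ⟨r, hr, hr2⟩ := exists_mem_adjoin_X_mul_two_sub_X_eq_two m
  have hX : X m - 2 ≠ 0 := (sub_neg.mpr (X_lt_two m)).ne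
  rw [show 4 / (X m - 2) = -2 * r by rw [div_eq_iff hX]; linear_combination (-2 : ℝ) * hr2]
  exact mul_mem (neg_mem (natCast_mem _ 2)) hr

theorem stmt13 (n : ℕ) (hn : 1 ≤ n)
    (c : ℕ → ℝ) (hc0 : c 0 = 2)
    (hcodd : ∀ k, c (2 * k + 1) = 4 / (X (n - 1) - 2))
    (hceven : ∀ k, c (2 * k + 2) = 4) :
    4 / (X (n - 1) - 2) ∈ Algebra.adjoin ℤ ({X (n - 1)} : Set ℝ) ∧
      CFConv c (X n) := by
  obtain ⟨m, rfl⟩ := Nat.exists_eq_add_of_le' hn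
  rw [Nat.add_sub_cancel] at hcodd ⊢
  refine ⟨four_div_X_sub_two_mem_adjoin m, ?_⟩
  rw [show X m - 2 = X (m + 1) ^ 2 - 4 by rw [X_succ_sq]; ring] at hcodd
  exact cfConv_of_periodic (X_succ_pos m) (X_lt_two _).ne hc0 hcodd hceven
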